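/- Let M be a finite influence model with functional serial relation R_p with endomap r_p. Agent i stabilizes for issue p under the BDP dynamics (its opinion on p is eventually constant) if and only if there exists k ∈ ℕ such that the agent j = r_p^k(i) is stable for p, i.e., all agents R_p-reachable from j agree with j on p. -/
import Mathlib


/-- One step of the (single-issue) Boolean DeGroot process. -/
def bstep {N : Type*} (f : N → N) (O : N → Bool) : N → Bool := fun i => O (f i)

lemma bstep_iter {N : Type*} (r : N → N) (O : N → Bool) (m : ℕ) (i : N) :
    ((bstep r)^[m] O) i = O (r^[m] i) := by
  induction m generalizing O i with
  | zero => rfl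
  | succ m ih =>
    rw [Function.iterate_succ_apply, ih, Function.iterate_succ_apply']
    rfl

lemma reach_iff {N : Type*} (r : N → N) (x j : N) :
    Relation.ReflTransGen (fun a b => r a = b) x j ↔ ∃ t, r^[t] x = j := by
  constructor
  · intro h
    induction h with
    | refl => exact ⟨0, rfl⟩
    | tail _ hbc ih =>
      obtain ⟨t, ht⟩ := ih
      exact ⟨t + 1, by rw [Function.iterate_succ_apply', ht]; exact hbc⟩
  · rintro ⟨t, rfl⟩
    induction t with
    | zero => exact Relation.ReflTransGen.refl
    | succ t ih =>
      exact ih.tail (by rw [Function.iterate_succ_apply'])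

/-- Agent `i` stabilizes for an issue (its opinion is eventually constant) iff some
iterated influencer `j = r^[k] i` of `i` is stable, i.e. all agents reachable from
`j` agree with `j`. -/
theorem stmt19 {N : Type*} [Fintype N] (r : N → N) (O : N → Bool) (i : N) :
    (∃ n : ℕ, ∀ m, n ≤ m → ((bstep r)^[m] O) i = ((bstep r)^[n] O) i) ↔
      ∃ k : ℕ, ∀ j, Relation.ReflTransGen (fun a b => r a = b) (r^[k] i) j →
        O j = O (r^[k] i) := by
  constructor
  · rintro ⟨n, hn⟩
    refine ⟨n, fun j hj => ?_⟩
    obtain ⟨t, rfl⟩ := (reach_iff r _ j).1 hj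
    rw [← Function.iterate_add_apply]
    have := hn (t + n) (Nat.le_add_left n t)
    rwa [bstep_iter, bstep_iter] at this
  · rintro ⟨k, hk⟩
    refine ⟨k, fun m hm => ?_⟩
    rw [bstep_iter, bstep_iter]
    have : r^[m] i = r^[m - k] (r^[k] i) := by
      rw [← Function.iterate_add_apply, Nat.sub_add_cancel hm]
    rw [this]
    exact hk _ ((reach_iff r _ _).2 ⟨m - k, rfl⟩)
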